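/- arXiv:2507.00572 — 3 statements merged into one kernel-verified Lean document; each statement's English description precedes it below -/
import Mathlib

section
/- Let λ^{(i)}_j ∈ [1/2, 1] for i ∈ [m], 1 ≤ j ≤ k, with λ^{(i)}_0 = 1, and suppose that for each i, ∑_{j=1}^k |1 - 1/λ^{(i)}_j| ≤ c_i. Then ∑_{(j_1,…,j_m): j_1+⋯+j_m ≤ k} |1 - 1/∏_{i=1}^m λ^{(i)}_{j_i}| ≤ 2^{m-1} · binomial(k+m-1, m-1) · ∑_{i=1}^m c_i. -/
/-- If each `x i ∈ [1,2]` on `s`, then `∏ x - 1 ≤ 2^(|s|-1) * ∑ (x i - 1)`. -/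
lemma aux_prod_sub_one {ι : Type*} (s : Finset ι) (x : ι → ℝ)
    (h1 : ∀ i ∈ s, 1 ≤ x i) (h2 : ∀ i ∈ s, x i ≤ 2) :
    ∏ i ∈ s, x i - 1 ≤ 2 ^ (s.card - 1) * ∑ i ∈ s, (x i - 1) := by
  classical
  induction s using Finset.induction_on with
  | empty => simp
  | @insert a s ha ih =>
    have h1s : ∀ i ∈ s, 1 ≤ x i := fun i hi => h1 i (Finset.mem_insert_of_mem hi)
    have h2s : ∀ i ∈ s, x i ≤ 2 := fun i hi => h2 i (Finset.mem_insert_of_mem hi)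
    have hP1 : (1 : ℝ) ≤ ∏ i ∈ s, x i := by
      have := Finset.prod_le_prod (s := s) (f := fun _ : ι => (1 : ℝ)) (g := x)
        (fun i _ => zero_le_one) h1s
      simpa using this
    have hT0 : (0 : ℝ) ≤ ∑ i ∈ s, (x i - 1) :=
      Finset.sum_nonneg fun i hi => by linarith [h1s i hi]
    have ha1 : 1 ≤ x a := h1 a (Finset.mem_insert_self a s)
    have ha2 : x a ≤ 2 := h2 a (Finset.mem_insert_self a s)
    have ih' := ih h1s h2s
    rw [Finset.prod_insert ha, Finset.sum_insert ha, Finset.card_insert_of_notMem ha]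
    rcases s.eq_empty_or_nonempty with rfl | hs
    · simp
    · have hcard : 1 ≤ s.card := Finset.card_pos.2 hs
      have hexp : s.card + 1 - 1 = s.card := by omega
      rw [hexp]
      have hpow : (2 : ℝ) ^ s.card = 2 * 2 ^ (s.card - 1) := by
        rw [← pow_succ']
        congr 1
        omega
      have hQ1 : (1 : ℝ) ≤ 2 ^ (s.card - 1) := one_le_pow₀ one_le_two
      set P := ∏ i ∈ s, x i
      set T := ∑ i ∈ s, (x i - 1)
      set Q := (2 : ℝ) ^ (s.card - 1)
      rw [hpow]
      nlinarith [mul_nonneg (sub_nonneg.2 ha2) (sub_nonneg.2 hP1),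
        mul_nonneg (sub_nonneg.2 hQ1) (sub_nonneg.2 ha1),
        mul_nonneg (sub_nonneg.2 ha1) hT0]

lemma aux_card_finsum {α β : Type*} (s : Finset β) (f : β → Multiset α) :
    Multiset.card (∑ b ∈ s, f b) = ∑ b ∈ s, Multiset.card (f b) := by
  classical
  induction s using Finset.induction_on with
  | empty => simp
  | @insert a s ha ih => simp [Finset.sum_insert ha, ih]

/-- Counting lemma: tuples with sum `≤ k` and fixed `i`-th coordinate are at most
`(k+m-1).choose (m-1)` many. -/
lemma aux_card (m k : ℕ) (i : Fin m) (v : Fin (k + 1)) :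
    (Finset.univ.filter (fun j : Fin m → Fin (k + 1) =>
        (∑ i', (j i' : ℕ)) ≤ k ∧ j i = v)).card ≤ (k + m - 1).choose (m - 1) := by
  classical
  set f : (Fin m → Fin (k + 1)) → Fin m → ℕ := fun j i' =>
    if i' = i then k - ∑ i'' ∈ Finset.univ.erase i, (j i'' : ℕ) else (j i' : ℕ) with hf
  set F : (Fin m → Fin (k + 1)) → Multiset (Fin m) := fun j =>
    ∑ i' : Fin m, Multiset.replicate (f j i') i' with hF
  have hcount : ∀ j a, Multiset.count a (F j) = f j a := by
    intro j a
    rw [hF]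
    simp only [Multiset.count_sum', Multiset.count_replicate]
    rw [Finset.sum_ite_eq' Finset.univ a (f j)]
    simp
  have hcard : ∀ j : Fin m → Fin (k + 1), (∑ i', (j i' : ℕ)) ≤ k →
      Multiset.card (F j) = k := by
    intro j hj
    have hS : (∑ i'' ∈ Finset.univ.erase i, (j i'' : ℕ)) ≤ k := by
      refine le_trans ?_ hj
      exact Finset.sum_le_sum_of_subset (Finset.erase_subset i Finset.univ)
    rw [hF]
    rw [aux_card_finsum]
    simp only [Multiset.card_replicate]
    rw [← Finset.sum_erase_add _ _ (Finset.mem_univ i)]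
    have h1 : ∀ i' ∈ Finset.univ.erase i, f j i' = (j i' : ℕ) := by
      intro i' hi'
      rw [hf]
      simp [Finset.ne_of_mem_erase hi']
    rw [Finset.sum_congr rfl h1]
    have h2 : f j i = k - ∑ i'' ∈ Finset.univ.erase i, (j i'' : ℕ) := by rw [hf]; simp
    rw [h2]
    omega
  -- the target finset: all multisets coming from `Sym (Fin m) k`
  set T : Finset (Multiset (Fin m)) :=
    Finset.univ.image (fun s : Sym (Fin m) k => (s : Multiset (Fin m))) with hT
  have hmaps : ∀ j ∈ Finset.univ.filter (fun j : Fin m → Fin (k + 1) =>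
      (∑ i', (j i' : ℕ)) ≤ k ∧ j i = v), F j ∈ T := by
    intro j hj
    rw [Finset.mem_filter] at hj
    rw [hT, Finset.mem_image]
    exact ⟨⟨F j, hcard j hj.2.1⟩, Finset.mem_univ _, rfl⟩
  have hinj : Set.InjOn F (Finset.univ.filter (fun j : Fin m → Fin (k + 1) =>
      (∑ i', (j i' : ℕ)) ≤ k ∧ j i = v)) := by
    intro j1 hj1 j2 hj2 hEq
    simp only [Finset.coe_filter, Set.mem_setOf_eq] at hj1 hj2
    funext a
    by_cases hai : a = i
    · rw [hai, hj1.2.2, hj2.2.2]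
    · have := congrArg (Multiset.count a) hEq
      rw [hcount, hcount, hf] at this
      simp only [hai, if_false] at this
      exact Fin.ext this
  have hle := Finset.card_le_card_of_injOn F hmaps hinj
  refine hle.trans ?_
  have hTcard : T.card = Fintype.card (Sym (Fin m) k) := by
    rw [hT, Finset.card_image_of_injective _ Sym.coe_injective, Finset.card_univ]
  have hm : 1 ≤ m := i.pos
  have hsymm : (m + k - 1).choose k = (k + m - 1).choose (m - 1) := by
    clear_value f F T
    clear hle hTcard hmaps hinj hcount hcard hf hF hT f F T v i
    obtain ⟨n, rfl⟩ : ∃ n, m = n + 1 := ⟨m - 1, by omega⟩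
    simp only [Nat.add_sub_cancel, show n + 1 + k - 1 = n + k from by omega,
      show k + (n + 1) - 1 = k + n from by omega]
    rw [Nat.add_comm n k]
    exact Nat.choose_symm_add
  rw [hTcard, Sym.card_sym_eq_choose, Fintype.card_fin, hsymm]

/-- With λ^{(i)}_0 = 1, λ^{(i)}_j ∈ [1/2,1], and
∑_{j=1}^k |1 - 1/λ^{(i)}_j| ≤ c_i for each i, the sum over tuples
(j_1,…,j_m) with j_1+⋯+j_m ≤ k of |1 - 1/∏ λ^{(i)}_{j_i}| is at most
2^{m-1} · binomial(k+m-1, m-1) · ∑ c_i. -/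
theorem stmt_2 (m k : ℕ) (lam : Fin m → ℕ → ℝ) (c : Fin m → ℝ)
    (hlam0 : ∀ i, lam i 0 = 1)
    (hlam : ∀ i, ∀ j ≤ k, lam i j ∈ Set.Icc (1 / 2 : ℝ) 1)
    (hc : ∀ i, ∑ j ∈ Finset.Icc 1 k, |1 - 1 / lam i j| ≤ c i) :
    ∑ j ∈ Finset.univ.filter (fun j : Fin m → Fin (k + 1) => ∑ i, (j i : ℕ) ≤ k),
        |1 - 1 / ∏ i, lam i (j i : ℕ)| ≤
      (2 : ℝ) ^ (m - 1) * ((k + m - 1).choose (m - 1) : ℝ) * ∑ i, c i := by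
  classical
  set S := Finset.univ.filter (fun j : Fin m → Fin (k + 1) => ∑ i, (j i : ℕ) ≤ k) with hS
  -- basic facts about lam values
  have hmem : ∀ (i : Fin m) (v : Fin (k + 1)), lam i (v : ℕ) ∈ Set.Icc (1 / 2 : ℝ) 1 :=
    fun i v => hlam i v (Nat.lt_succ_iff.1 v.isLt)
  have hpos : ∀ (i : Fin m) (v : Fin (k + 1)), (0 : ℝ) < lam i (v : ℕ) := by
    intro i v; have := (hmem i v).1; linarith
  have hxmem : ∀ (i : Fin m) (v : Fin (k + 1)),
      1 ≤ (lam i (v : ℕ))⁻¹ ∧ (lam i (v : ℕ))⁻¹ ≤ 2 := by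
    intro i v
    obtain ⟨hlo, hhi⟩ := hmem i v
    constructor
    · rw [le_inv_comm₀ one_pos (hpos i v)]; simpa using hhi
    · rw [inv_le_comm₀ (hpos i v) two_pos]; linarith
  have habs : ∀ (i : Fin m) (v : Fin (k + 1)),
      |1 - 1 / lam i (v : ℕ)| = (lam i (v : ℕ))⁻¹ - 1 := by
    intro i v
    rw [one_div, abs_sub_comm, abs_of_nonneg (by linarith [(hxmem i v).1])]
  -- pointwise bound
  have hpoint : ∀ j ∈ S, |1 - 1 / ∏ i, lam i (j i : ℕ)| ≤
      2 ^ (m - 1) * ∑ i, |1 - 1 / lam i (j i : ℕ)| := by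
    intro j _
    have hprod : (1 : ℝ) / ∏ i, lam i (j i : ℕ) = ∏ i, (lam i (j i : ℕ))⁻¹ := by
      rw [one_div, ← Finset.prod_inv_distrib]
    have hP1 : (1 : ℝ) ≤ ∏ i, (lam i (j i : ℕ))⁻¹ := by
      have := Finset.prod_le_prod (s := Finset.univ) (f := fun _ : Fin m => (1 : ℝ))
        (g := fun i => (lam i (j i : ℕ))⁻¹) (fun i _ => zero_le_one)
        (fun i _ => (hxmem i (j i)).1)
      simpa using this
    rw [hprod, abs_sub_comm, abs_of_nonneg (by linarith)]
    have := aux_prod_sub_one Finset.univ (fun i => (lam i (j i : ℕ))⁻¹)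
      (fun i _ => (hxmem i (j i)).1) (fun i _ => (hxmem i (j i)).2)
    rw [Finset.card_univ, Fintype.card_fin] at this
    have h3 : ∏ i, (lam i (j i : ℕ))⁻¹ - 1 ≤
        2 ^ (m - 1) * ∑ i, ((lam i (j i : ℕ))⁻¹ - 1) := by simpa using this
    rw [show ∑ i, |1 - 1 / lam i (j i : ℕ)| = ∑ i, ((lam i (j i : ℕ))⁻¹ - 1) from
      Finset.sum_congr rfl fun i _ => habs i (j i)]
    exact h3
  -- counting bound for each i
  have hcnt : ∀ i : Fin m, ∑ j ∈ S, |1 - 1 / lam i (j i : ℕ)| ≤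
      ((k + m - 1).choose (m - 1) : ℝ) * c i := by
    intro i
    set G : Fin (k + 1) → ℝ := fun v => |1 - 1 / lam i (v : ℕ)| with hG
    have hfib : ∑ j ∈ S, G (j i) =
        ∑ v : Fin (k + 1), ((S.filter (fun j => j i = v)).card : ℝ) * G v := by
      rw [← Finset.sum_fiberwise S (fun j => j i) (fun j => G (j i))]
      refine Finset.sum_congr rfl fun v _ => ?_
      rw [Finset.sum_congr rfl (fun j hj => by rw [(Finset.mem_filter.1 hj).2]),
        Finset.sum_const, nsmul_eq_mul]
    have hGnn : ∀ v, 0 ≤ G v := fun v => abs_nonneg _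
    have hsumG : ∑ v : Fin (k + 1), G v ≤ c i := by
      have h0 : G (0 : Fin (k + 1)) = 0 := by
        rw [hG]; simp [hlam0 i]
      have hrange : ∑ v : Fin (k + 1), G v =
          ∑ n ∈ Finset.range (k + 1), |1 - 1 / lam i n| := by
        exact Fin.sum_univ_eq_sum_range (fun n => |1 - 1 / lam i n|) (k + 1)
      have hins : Finset.range (k + 1) = insert 0 (Finset.Icc 1 k) := by
        ext n; simp [Finset.mem_range, Finset.mem_Icc]; omega
      rw [hrange, hins, Finset.sum_insert (by simp), hlam0 i]
      have : |1 - 1 / (1 : ℝ)| = 0 := by norm_num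
      rw [this, zero_add]
      exact hc i
    have hcnn : (0 : ℝ) ≤ (k + m - 1).choose (m - 1) := Nat.cast_nonneg _
    calc ∑ j ∈ S, G (j i)
        = ∑ v : Fin (k + 1), ((S.filter (fun j => j i = v)).card : ℝ) * G v := hfib
      _ ≤ ∑ v : Fin (k + 1), ((k + m - 1).choose (m - 1) : ℝ) * G v := by
          refine Finset.sum_le_sum fun v _ => ?_
          refine mul_le_mul_of_nonneg_right ?_ (hGnn v)
          have : (S.filter (fun j => j i = v)).card ≤ (k + m - 1).choose (m - 1) := by
            rw [hS, Finset.filter_filter]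
            exact aux_card m k i v
          exact_mod_cast this
      _ = ((k + m - 1).choose (m - 1) : ℝ) * ∑ v : Fin (k + 1), G v := by
          rw [Finset.mul_sum]
      _ ≤ ((k + m - 1).choose (m - 1) : ℝ) * c i :=
          mul_le_mul_of_nonneg_left hsumG hcnn
  calc ∑ j ∈ S, |1 - 1 / ∏ i, lam i (j i : ℕ)|
      ≤ ∑ j ∈ S, 2 ^ (m - 1) * ∑ i, |1 - 1 / lam i (j i : ℕ)| :=
        Finset.sum_le_sum hpoint
    _ = 2 ^ (m - 1) * ∑ i, ∑ j ∈ S, |1 - 1 / lam i (j i : ℕ)| := by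
        rw [← Finset.mul_sum, Finset.sum_comm]
    _ ≤ 2 ^ (m - 1) * ∑ i, ((k + m - 1).choose (m - 1) : ℝ) * c i := by
        refine mul_le_mul_of_nonneg_left (Finset.sum_le_sum fun i _ => hcnt i)
          (pow_nonneg (by norm_num) _)
    _ = (2 : ℝ) ^ (m - 1) * ((k + m - 1).choose (m - 1) : ℝ) * ∑ i, c i := by
        rw [← Finset.mul_sum, mul_assoc]
end

section
/- Let y ∈ ℝ^{s(n,2r)} with y_0 = 1 be such that the moment matrix M_r(y) is positive semidefinite and the localizing matrix M_{r-1}((R² - ‖x‖²)·y) is positive semidefinite, where R ≥ 1. Then ‖y‖ ≤ sqrt(binomial(n+r, n)) · ∑_{i=0}^r R^{2i}. -/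
private lemma psd_diag_nonneg {m : Type*} [Fintype m] [DecidableEq m] {M : Matrix m m ℝ}
    (hM : M.PosSemidef) (a : m) : 0 ≤ M a a := by
  have h := hM.dotProduct_mulVec_nonneg (Pi.single a 1)
  simpa [Matrix.mulVec_single, dotProduct_single] using h

private lemma psd_entry_sq {m : Type*} [Fintype m] [DecidableEq m] {M : Matrix m m ℝ}
    (hM : M.PosSemidef) (a b : m) : M a b ^ 2 ≤ M a a * M b b := by
  rcases eq_or_ne a b with rfl | hab
  · rw [sq]
  · have hsym : M b a = M a b := by
      have := hM.1.apply a b; simpa using this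
    have hq : ∀ t : ℝ, 0 ≤ M a a * (t * t) + (2 * M a b) * t + M b b := by
      intro t
      have h := hM.dotProduct_mulVec_nonneg ((Pi.single a t : m → ℝ) + Pi.single b 1)
      have hstar : star ((Pi.single a t : m → ℝ) + Pi.single b 1) =
          (Pi.single a t : m → ℝ) + Pi.single b 1 := by
        simp
      rw [hstar, Matrix.mulVec_add, Matrix.mulVec_single, Matrix.mulVec_single] at h
      rw [add_dotProduct, single_dotProduct, single_dotProduct] at h
      simp only [Pi.add_apply, Pi.single_eq_same, Pi.single_eq_of_ne hab,
        Pi.single_eq_of_ne (Ne.symm hab), Pi.smul_apply, Matrix.col_apply, op_smul_eq_mul] at h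
      rw [hsym] at h
      ring_nf at h ⊢
      linarith [h]
    have hd := discrim_le_zero hq
    rw [discrim] at hd
    nlinarith [hd]

private lemma sum_le_sum_inj {ι κ : Type*} [DecidableEq κ] (s : Finset ι) (t : Finset κ)
    (e : ι → κ) (he : Set.InjOn e s) (hmem : ∀ i ∈ s, e i ∈ t)
    (f : ι → ℝ) (g : κ → ℝ) (hg : ∀ k ∈ t, 0 ≤ g k)
    (hf : ∀ i ∈ s, f i ≤ g (e i)) :
    ∑ i ∈ s, f i ≤ ∑ k ∈ t, g k := by
  calc ∑ i ∈ s, f i ≤ ∑ i ∈ s, g (e i) := Finset.sum_le_sum hf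
    _ = ∑ k ∈ s.image e, g k := (Finset.sum_image fun a ha b hb hab => he ha hb hab).symm
    _ ≤ ∑ k ∈ t, g k := Finset.sum_le_sum_of_subset_of_nonneg
        (Finset.image_subset_iff.2 hmem) fun k hk _ => hg k hk

private lemma coord_le {n m : ℕ} (a : Fin n → Fin m) (i : Fin n) :
    (a i : ℕ) ≤ ∑ j, (a j : ℕ) :=
  Finset.single_le_sum (f := fun j => (a j : ℕ)) (fun _ _ => Nat.zero_le _)
    (Finset.mem_univ i)


private lemma exists_split : ∀ (n r : ℕ) (c : Fin n → ℕ), ∑ i, c i ≤ 2 * r →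
    ∃ A B : Fin n → ℕ, (∀ i, A i + B i = c i) ∧ ∑ i, A i ≤ r ∧ ∑ i, B i ≤ r := by
  intro n
  induction n with
  | zero =>
    intro r c _
    exact ⟨(fun _ => 0), (fun _ => 0), fun i => Fin.elim0 i, by simp, by simp⟩
  | succ n ih =>
    intro r c hc
    have hsum : ∑ i, c i = ∑ i : Fin n, c i.castSucc + c (Fin.last n) :=
      Fin.sum_univ_castSucc c
    obtain ⟨A', B', hab, hA, hB⟩ := ih r (fun i => c i.castSucc)
      (by simpa using (show ∑ i : Fin n, c i.castSucc ≤ 2 * r by omega))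
    have hab' : ∑ i : Fin n, A' i + ∑ i : Fin n, B' i = ∑ i : Fin n, c i.castSucc := by
      rw [← Finset.sum_add_distrib]; exact Finset.sum_congr rfl fun i _ => hab i
    refine ⟨Fin.snoc A' (min (c (Fin.last n)) (r - ∑ i, A' i)),
            Fin.snoc B' (c (Fin.last n) - min (c (Fin.last n)) (r - ∑ i, A' i)), ?_, ?_, ?_⟩
    · intro i
      refine Fin.lastCases ?_ ?_ i
      · simp only [Fin.snoc_last]; omega
      · intro j; simp only [Fin.snoc_castSucc]; exact hab j
    · rw [Fin.sum_univ_castSucc]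
      simp only [Fin.snoc_castSucc, Fin.snoc_last]
      omega
    · rw [Fin.sum_univ_castSucc]
      simp only [Fin.snoc_castSucc, Fin.snoc_last]
      omega

/-- If y is a pseudo-moment sequence of order 2r (y_0 = 1, the
moment matrix M_r(y) ⪰ 0 and the localizing matrix of R² - ‖x‖² ⪰ 0, R ≥ 1),
then the Euclidean norm of (y_α)_{|α| ≤ 2r} is at most
√(binom(n+r, n)) · ∑_{i=0}^r R^{2i}. -/
theorem stmt_12 (n r : ℕ) (hr : 1 ≤ r) (R : ℝ) (hR : 1 ≤ R)
    (y : (Fin n → ℕ) → ℝ)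
    (hy0 : y (fun _ => 0) = 1)
    (hM : (Matrix.of fun (α β : {α : Fin n → Fin (r + 1) // ∑ i, (α i : ℕ) ≤ r}) =>
        y (fun i => (α.1 i : ℕ) + (β.1 i : ℕ))).PosSemidef)
    (hLoc : (Matrix.of fun (α β : {α : Fin n → Fin (r + 1) // ∑ i, (α i : ℕ) ≤ r - 1}) =>
        R ^ 2 * y (fun i => (α.1 i : ℕ) + (β.1 i : ℕ)) -
          ∑ i₀, y (fun i => (α.1 i : ℕ) + (β.1 i : ℕ) +
            (if i = i₀ then 2 else 0))).PosSemidef) :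
    Real.sqrt (∑ α : {α : Fin n → Fin (2 * r + 1) // ∑ i, (α i : ℕ) ≤ 2 * r},
        y (fun i => (α.1 i : ℕ)) ^ 2) ≤
      Real.sqrt ((n + r).choose n) * ∑ i ∈ Finset.range (r + 1), R ^ (2 * i) := by
  classical
  have hR0 : (0:ℝ) < R := lt_of_lt_of_le one_pos hR
  -- diagonal entries of the moment matrix are nonnegative
  have hdiag : ∀ a : {α : Fin n → Fin (r + 1) // ∑ i, (α i : ℕ) ≤ r},
      0 ≤ y (fun i => (a.1 i : ℕ) + (a.1 i : ℕ)) := by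
    intro a
    simpa using psd_diag_nonneg hM a
  -- 2×2 minors: Cauchy-Schwarz for entries
  have hCS : ∀ a b : {α : Fin n → Fin (r + 1) // ∑ i, (α i : ℕ) ≤ r},
      y (fun i => (a.1 i : ℕ) + (b.1 i : ℕ)) ^ 2 ≤
        y (fun i => (a.1 i : ℕ) + (a.1 i : ℕ)) *
        y (fun i => (b.1 i : ℕ) + (b.1 i : ℕ)) := by
    intro a b
    simpa using psd_entry_sq hM a b
  -- diagonal entries of the localizing matrix are nonnegative
  have hloc : ∀ a : {α : Fin n → Fin (r + 1) // ∑ i, (α i : ℕ) ≤ r - 1},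
      ∑ i₀, y (fun i => (a.1 i : ℕ) + (a.1 i : ℕ) + (if i = i₀ then 2 else 0)) ≤
        R ^ 2 * y (fun i => (a.1 i : ℕ) + (a.1 i : ℕ)) := by
    intro a
    have h := psd_diag_nonneg hLoc a
    simp only [Matrix.of_apply] at h
    linarith
  -- the key inductive bound on sums of diagonal pseudo-moments of fixed degree
  have hU : ∀ k, k ≤ r → ∑ a ∈ Finset.univ.filter
      (fun a : {α : Fin n → Fin (r + 1) // ∑ i, (α i : ℕ) ≤ r} => ∑ i, (a.1 i : ℕ) = k),
      y (fun i => (a.1 i : ℕ) + (a.1 i : ℕ)) ≤ R ^ (2 * k) := by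
    intro k
    induction k with
    | zero =>
      intro _
      have hz : (Finset.univ.filter
          (fun a : {α : Fin n → Fin (r + 1) // ∑ i, (α i : ℕ) ≤ r} =>
            ∑ i, (a.1 i : ℕ) = 0)) = {⟨fun _ => 0, by simp⟩} := by
        ext a
        simp only [Finset.mem_filter, Finset.mem_univ, true_and, Finset.mem_singleton]
        constructor
        · intro h
          apply Subtype.ext; funext i
          have h2 : (a.1 i : ℕ) = 0 :=
            (Finset.sum_eq_zero_iff).mp h i (Finset.mem_univ i)
          exact Fin.ext (by simpa using h2)
        · intro h; subst h; simp
      rw [hz, Finset.sum_singleton]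
      have he : (fun i : Fin n =>
          (((⟨fun _ => 0, by simp⟩ : {α : Fin n → Fin (r + 1) // ∑ i, (α i : ℕ) ≤ r}).1 i : ℕ)
            + ((⟨fun _ => 0, by simp⟩ : {α : Fin n → Fin (r + 1) // ∑ i, (α i : ℕ) ≤ r}).1 i : ℕ)))
          = (fun _ : Fin n => (0:ℕ)) := by
        funext i; simp
      rw [he, hy0]
      simp
    | succ k ih =>
      intro hk1
      by_cases hn : n = 0
      · subst hn
        have hz : (Finset.univ.filter
            (fun a : {α : Fin 0 → Fin (r + 1) // ∑ i, (α i : ℕ) ≤ r} =>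
              ∑ i, (a.1 i : ℕ) = k + 1)) = ∅ := by
          apply Finset.filter_eq_empty_iff.mpr
          intro a _
          simp
        rw [hz, Finset.sum_empty]
        positivity
      · have hnpos : 0 < n := Nat.pos_of_ne_zero hn
        -- every degree-(k+1) index has a predecessor
        have hex : ∀ b : {α : Fin n → Fin (r + 1) // ∑ i, (α i : ℕ) ≤ r},
            ∃ p : {α : Fin n → Fin (r + 1) // ∑ i, (α i : ℕ) ≤ r} × Fin n,
              (∑ i, (b.1 i : ℕ) = k + 1) →
              ((∑ i, (p.1.1 i : ℕ) = k) ∧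
               ∀ j, (b.1 j : ℕ) = (p.1.1 j : ℕ) + (if j = p.2 then 1 else 0)) := by
          intro b
          by_cases hb : ∑ i, (b.1 i : ℕ) = k + 1
          · have hne : ∃ i, (b.1 i : ℕ) ≠ 0 := by
              by_contra hcon
              push_neg at hcon
              have h0 : ∑ i, (b.1 i : ℕ) = 0 :=
                Finset.sum_eq_zero (fun i _ => hcon i)
              omega
            obtain ⟨i0, hi0⟩ := hne
            have hble : ∀ j, (b.1 j : ℕ) ≤ r := fun j => le_trans (coord_le b.1 j) b.2
            set a' : Fin n → Fin (r + 1) := fun j =>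
              ⟨(b.1 j : ℕ) - (if j = i0 then 1 else 0),
                Nat.lt_succ_of_le (le_trans (Nat.sub_le _ _) (hble j))⟩ with ha'
            have haeq : ∀ j, (b.1 j : ℕ) = (a' j : ℕ) + (if j = i0 then 1 else 0) := by
              intro j
              by_cases h : j = i0
              · subst h; simp [ha']; omega
              · simp [ha', h]
            have hsum' : ∑ j, (a' j : ℕ) = k := by
              have h1 : ∑ j, (b.1 j : ℕ) =
                  ∑ j, ((a' j : ℕ) + (if j = i0 then 1 else 0)) :=
                Finset.sum_congr rfl (fun j _ => haeq j)
              rw [Finset.sum_add_distrib] at h1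
              have h2 : ∑ j, (if j = i0 then 1 else 0) = 1 := by
                simp [Finset.sum_ite_eq']
              omega
            exact ⟨(⟨a', by omega⟩, i0), fun _ => ⟨hsum', haeq⟩⟩
          · exact ⟨(b, ⟨0, hnpos⟩), fun h => absurd h hb⟩
        choose ep hep using hex
        have hstep1 : ∑ b ∈ Finset.univ.filter
            (fun b : {α : Fin n → Fin (r + 1) // ∑ i, (α i : ℕ) ≤ r} =>
              ∑ i, (b.1 i : ℕ) = k + 1),
            y (fun i => (b.1 i : ℕ) + (b.1 i : ℕ)) ≤
            ∑ p ∈ (Finset.univ.filter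
              (fun a : {α : Fin n → Fin (r + 1) // ∑ i, (α i : ℕ) ≤ r} =>
                ∑ i, (a.1 i : ℕ) = k)) ×ˢ Finset.univ,
            y (fun i => (p.1.1 i : ℕ) + (p.1.1 i : ℕ) + (if i = p.2 then 2 else 0)) := by
          apply sum_le_sum_inj _ _ ep
          · intro b hb b' hb' hEq
            simp only [Finset.coe_filter, Set.mem_setOf_eq, Finset.mem_univ,
              true_and] at hb hb'
            obtain ⟨_, h1⟩ := hep b hb
            obtain ⟨_, h2⟩ := hep b' hb'
            apply Subtype.ext; funext j; apply Fin.ext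
            have e1 := h1 j
            have e2 := h2 j
            rw [hEq] at e1
            omega
          · intro b hb
            simp only [Finset.mem_filter, Finset.mem_univ, true_and] at hb
            obtain ⟨hd, _⟩ := hep b hb
            simp [Finset.mem_product, hd]
          · intro p hp
            simp only [Finset.mem_product, Finset.mem_filter, Finset.mem_univ,
              true_and] at hp
            have hks : k + 1 ≤ r := hk1
            have hco : ∀ j, (p.1.1 j : ℕ) + (if j = p.2 then 1 else 0) < r + 1 := by
              intro j
              have h1 := coord_le p.1.1 j
              have h2 : ∑ i, (p.1.1 i : ℕ) = k := hp.1
              have h3 : k + 1 ≤ r := hk1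
              by_cases h : j = p.2
              · rw [if_pos h]; omega
              · rw [if_neg h]; omega
            have hcs : ∑ j, ((p.1.1 j : ℕ) + (if j = p.2 then 1 else 0)) ≤ r := by
              rw [Finset.sum_add_distrib]
              have h2 : ∑ j, (if j = p.2 then 1 else 0) = 1 := by
                simp [Finset.sum_ite_eq']
              rw [hp.1, h2]
              omega
            have h0 := hdiag ⟨fun j => ⟨(p.1.1 j : ℕ) + (if j = p.2 then 1 else 0), hco j⟩,
              by simpa using hcs⟩
            have heqf : (fun i : Fin n =>
                (((⟨(p.1.1 i : ℕ) + (if i = p.2 then 1 else 0), hco i⟩ : Fin (r+1)) : ℕ) +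
                 ((⟨(p.1.1 i : ℕ) + (if i = p.2 then 1 else 0), hco i⟩ : Fin (r+1)) : ℕ)))
                = (fun i : Fin n =>
                  (p.1.1 i : ℕ) + (p.1.1 i : ℕ) + (if i = p.2 then 2 else 0)) := by
              funext i
              by_cases h : i = p.2 <;> simp [h] <;> omega
            rw [heqf] at h0
            exact h0
          · intro b hb
            simp only [Finset.mem_filter, Finset.mem_univ, true_and] at hb
            obtain ⟨_, heq⟩ := hep b hb
            have hfe : (fun i : Fin n => (b.1 i : ℕ) + (b.1 i : ℕ)) =
                (fun i : Fin n => ((ep b).1.1 i : ℕ) + ((ep b).1.1 i : ℕ) +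
                  (if i = (ep b).2 then 2 else 0)) := by
              funext i
              have := heq i
              by_cases h : i = (ep b).2 <;> simp [h] at this ⊢ <;> omega
            rw [hfe]
        have hstep2 : ∑ p ∈ (Finset.univ.filter
              (fun a : {α : Fin n → Fin (r + 1) // ∑ i, (α i : ℕ) ≤ r} =>
                ∑ i, (a.1 i : ℕ) = k)) ×ˢ Finset.univ,
            y (fun i => (p.1.1 i : ℕ) + (p.1.1 i : ℕ) + (if i = p.2 then 2 else 0)) ≤
            R ^ 2 * ∑ a ∈ Finset.univ.filter
              (fun a : {α : Fin n → Fin (r + 1) // ∑ i, (α i : ℕ) ≤ r} =>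
                ∑ i, (a.1 i : ℕ) = k),
              y (fun i => (a.1 i : ℕ) + (a.1 i : ℕ)) := by
          rw [Finset.sum_product, Finset.mul_sum]
          apply Finset.sum_le_sum
          intro a ha
          simp only [Finset.mem_filter, Finset.mem_univ, true_and] at ha
          have hk' : ∑ i, (a.1 i : ℕ) ≤ r - 1 := by omega
          exact hloc ⟨a.1, hk'⟩
        calc ∑ b ∈ Finset.univ.filter
              (fun b : {α : Fin n → Fin (r + 1) // ∑ i, (α i : ℕ) ≤ r} =>
                ∑ i, (b.1 i : ℕ) = k + 1),
              y (fun i => (b.1 i : ℕ) + (b.1 i : ℕ))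
            ≤ R ^ 2 * ∑ a ∈ Finset.univ.filter
              (fun a : {α : Fin n → Fin (r + 1) // ∑ i, (α i : ℕ) ≤ r} =>
                ∑ i, (a.1 i : ℕ) = k),
              y (fun i => (a.1 i : ℕ) + (a.1 i : ℕ)) := le_trans hstep1 hstep2
          _ ≤ R ^ 2 * R ^ (2 * k) := by
              apply mul_le_mul_of_nonneg_left (ih (by omega))
              positivity
          _ = R ^ (2 * (k + 1)) := by
              rw [← pow_add]; ring_nf
  -- sum over all of S of diagonal pseudo-moments
  have hUsum : ∑ a : {α : Fin n → Fin (r + 1) // ∑ i, (α i : ℕ) ≤ r},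
      y (fun i => (a.1 i : ℕ) + (a.1 i : ℕ)) ≤ ∑ i ∈ Finset.range (r + 1), R ^ (2 * i) := by
    rw [← Finset.sum_fiberwise_of_maps_to
      (g := fun a : {α : Fin n → Fin (r + 1) // ∑ i, (α i : ℕ) ≤ r} => ∑ i, (a.1 i : ℕ))
      (t := Finset.range (r + 1)) (fun a _ => Finset.mem_range.mpr (Nat.lt_succ_of_le a.2))]
    exact Finset.sum_le_sum fun k hk => hU k (Nat.lt_succ_iff.mp (Finset.mem_range.mp hk))
  -- splitting each multi-index of degree ≤ 2r into two halves of degree ≤ r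
  have hsplit : ∀ γ : {α : Fin n → Fin (2 * r + 1) // ∑ i, (α i : ℕ) ≤ 2 * r},
      ∃ p : {α : Fin n → Fin (r + 1) // ∑ i, (α i : ℕ) ≤ r} ×
            {α : Fin n → Fin (r + 1) // ∑ i, (α i : ℕ) ≤ r},
        ∀ i, (γ.1 i : ℕ) = (p.1.1 i : ℕ) + (p.2.1 i : ℕ) := by
    intro γ
    obtain ⟨A, B, hab, hA, hB⟩ :=
      exists_split n r (fun i => (γ.1 i : ℕ)) γ.2
    have hAco : ∀ i, A i < r + 1 := fun i =>
      Nat.lt_succ_of_le (le_trans (Finset.single_le_sum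
        (f := fun j => A j) (fun _ _ => Nat.zero_le _) (Finset.mem_univ i)) hA)
    have hBco : ∀ i, B i < r + 1 := fun i =>
      Nat.lt_succ_of_le (le_trans (Finset.single_le_sum
        (f := fun j => B j) (fun _ _ => Nat.zero_le _) (Finset.mem_univ i)) hB)
    refine ⟨(⟨fun i => ⟨A i, hAco i⟩, by simpa using hA⟩,
             ⟨fun i => ⟨B i, hBco i⟩, by simpa using hB⟩), ?_⟩
    intro i
    have := hab i
    simpa using this.symm
  -- main comparison
  have hsplitsum : ∑ γ : {α : Fin n → Fin (2 * r + 1) // ∑ i, (α i : ℕ) ≤ 2 * r},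
      y (fun i => (γ.1 i : ℕ)) ^ 2 ≤
      (∑ a : {α : Fin n → Fin (r + 1) // ∑ i, (α i : ℕ) ≤ r},
        y (fun i => (a.1 i : ℕ) + (a.1 i : ℕ))) *
      (∑ b : {α : Fin n → Fin (r + 1) // ∑ i, (α i : ℕ) ≤ r},
        y (fun i => (b.1 i : ℕ) + (b.1 i : ℕ))) := by
    choose sp hsp using hsplit
    have hmain : ∑ γ : {α : Fin n → Fin (2 * r + 1) // ∑ i, (α i : ℕ) ≤ 2 * r},
        y (fun i => (γ.1 i : ℕ)) ^ 2 ≤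
        ∑ p : {α : Fin n → Fin (r + 1) // ∑ i, (α i : ℕ) ≤ r} ×
              {α : Fin n → Fin (r + 1) // ∑ i, (α i : ℕ) ≤ r},
          y (fun i => (p.1.1 i : ℕ) + (p.1.1 i : ℕ)) *
          y (fun i => (p.2.1 i : ℕ) + (p.2.1 i : ℕ)) := by
      apply sum_le_sum_inj _ _ sp
      · intro γ _ γ' _ hEq
        apply Subtype.ext; funext i; apply Fin.ext
        have e1 := hsp γ i
        have e2 := hsp γ' i
        rw [hEq] at e1
        omega
      · intro γ _; exact Finset.mem_univ _
      · intro p _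
        exact mul_nonneg (hdiag p.1) (hdiag p.2)
      · intro γ _
        have h1 : (fun i : Fin n => (γ.1 i : ℕ)) =
            (fun i : Fin n => ((sp γ).1.1 i : ℕ) + ((sp γ).2.1 i : ℕ)) :=
          funext fun i => hsp γ i
        rw [h1]
        exact hCS (sp γ).1 (sp γ).2
    refine le_trans hmain (le_of_eq ?_)
    rw [Finset.sum_mul_sum, ← Finset.univ_product_univ, Finset.sum_product]
  -- put everything together
  have hK0 : 0 ≤ ∑ i ∈ Finset.range (r + 1), R ^ (2 * i) :=
    Finset.sum_nonneg fun i _ => pow_nonneg (le_of_lt hR0) _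
  have hy2nn : 0 ≤ ∑ a : {α : Fin n → Fin (r + 1) // ∑ i, (α i : ℕ) ≤ r},
      y (fun i => (a.1 i : ℕ) + (a.1 i : ℕ)) :=
    Finset.sum_nonneg fun a _ => hdiag a
  have hfinal : ∑ γ : {α : Fin n → Fin (2 * r + 1) // ∑ i, (α i : ℕ) ≤ 2 * r},
      y (fun i => (γ.1 i : ℕ)) ^ 2 ≤ (∑ i ∈ Finset.range (r + 1), R ^ (2 * i)) ^ 2 := by
    refine le_trans hsplitsum ?_
    rw [sq]
    exact mul_le_mul hUsum hUsum hy2nn hK0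
  have h1 : Real.sqrt (∑ γ : {α : Fin n → Fin (2 * r + 1) // ∑ i, (α i : ℕ) ≤ 2 * r},
      y (fun i => (γ.1 i : ℕ)) ^ 2) ≤ ∑ i ∈ Finset.range (r + 1), R ^ (2 * i) := by
    refine le_trans (Real.sqrt_le_sqrt hfinal) ?_
    rw [Real.sqrt_sq hK0]
  refine le_trans h1 ?_
  have hchoose : (1:ℝ) ≤ Real.sqrt ((n + r).choose n) := by
    rw [show (1:ℝ) = Real.sqrt 1 from (Real.sqrt_one).symm]
    apply Real.sqrt_le_sqrt
    have : 1 ≤ (n + r).choose n := Nat.choose_pos (Nat.le_add_right n r)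
    exact_mod_cast this
  exact le_mul_of_one_le_left hK0 hchoose
end

section
/- Let C : ℝ[x]_k → ℝ[x]_k be an invertible linear operator on the space of polynomials of degree at most k over a compact set X ⊆ ℝ^n, satisfying: (i) C(1) = 1; (ii) C maps nonnegative polynomials on X into a cone T of polynomials nonnegative on X; (iii) ‖C^{-1}f − f‖_X ≤ (γ/r²)·‖f‖_X for all f ∈ ℝ[x]_k, where ‖f‖_X = max_{x∈X}|f(x)| and γ > 0. Then for any f ∈ ℝ[x]_k with minimum f_min and maximum f_max on X, the polynomial f − f_min + ε belongs to T, where ε = (γ/r²)·(f_max − f_min). -/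
open MvPolynomial

/-- Abstract kernel argument. If C is an invertible linear
operator on ℝ[x]_k with C(1) = 1, mapping polynomials nonnegative on X into a
cone T of polynomials nonnegative on X, and ‖C⁻¹f - f‖_X ≤ (γ/r²)‖f‖_X, then
f - f_min + (γ/r²)(f_max - f_min) ∈ T. -/
theorem stmt_18 (n k : ℕ) (X : Set (Fin n → ℝ)) (hXc : IsCompact X)
    (hXne : X.Nonempty)
    (Cop : restrictTotalDegree (Fin n) ℝ k ≃ₗ[ℝ] restrictTotalDegree (Fin n) ℝ k)
    (T : Set (MvPolynomial (Fin n) ℝ))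
    (hT : ∀ p ∈ T, ∀ x ∈ X, 0 ≤ eval x p)
    (h1mem : (1 : MvPolynomial (Fin n) ℝ) ∈ restrictTotalDegree (Fin n) ℝ k)
    (hone : ((Cop ⟨1, h1mem⟩ : restrictTotalDegree (Fin n) ℝ k) :
        MvPolynomial (Fin n) ℝ) = 1)
    (hpos : ∀ f : restrictTotalDegree (Fin n) ℝ k,
      (∀ x ∈ X, 0 ≤ eval x (f : MvPolynomial (Fin n) ℝ)) →
      ((Cop f : restrictTotalDegree (Fin n) ℝ k) : MvPolynomial (Fin n) ℝ) ∈ T)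
    (γ r : ℝ) (hγ : 0 < γ) (hr : 0 < r)
    (happrox : ∀ f : restrictTotalDegree (Fin n) ℝ k,
      (⨆ x : X, |eval (x : Fin n → ℝ)
          ((Cop.symm f - f : restrictTotalDegree (Fin n) ℝ k) :
            MvPolynomial (Fin n) ℝ)|) ≤
        γ / r ^ 2 * ⨆ x : X, |eval (x : Fin n → ℝ) (f : MvPolynomial (Fin n) ℝ)|)
    (f : restrictTotalDegree (Fin n) ℝ k) (fmin fmax : ℝ)
    (hmin : ∀ x ∈ X, fmin ≤ eval x (f : MvPolynomial (Fin n) ℝ))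
    (hmin' : ∃ x ∈ X, eval x (f : MvPolynomial (Fin n) ℝ) = fmin)
    (hmax : ∀ x ∈ X, eval x (f : MvPolynomial (Fin n) ℝ) ≤ fmax)
    (hmax' : ∃ x ∈ X, eval x (f : MvPolynomial (Fin n) ℝ) = fmax) :
    (f : MvPolynomial (Fin n) ℝ) - C fmin + C (γ / r ^ 2 * (fmax - fmin)) ∈ T := by
  set ε := γ / r ^ 2 * (fmax - fmin) with hε
  have hc : 0 < γ / r ^ 2 := div_pos hγ (by positivity)
  obtain ⟨x0, hx0, hx0e⟩ := hmax'
  have hfle : 0 ≤ fmax - fmin := by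
    have := hmin x0 hx0; linarith [hx0e ▸ this]
  -- the element g = f - fmin • 1 of the submodule
  set one : restrictTotalDegree (Fin n) ℝ k := ⟨1, h1mem⟩ with hone'
  set g : restrictTotalDegree (Fin n) ℝ k := f - fmin • one with hg
  have hgcoe : (g : MvPolynomial (Fin n) ℝ) = (f : MvPolynomial (Fin n) ℝ) - C fmin := by
    simp [hg, hone', smul_eq_C_mul]
  have : Nonempty X := hXne.to_subtype
  -- sup bound for g
  have hsupg : (⨆ x : X, |eval (x : Fin n → ℝ) (g : MvPolynomial (Fin n) ℝ)|) ≤ fmax - fmin := by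
    refine ciSup_le fun x => ?_
    rw [hgcoe]
    simp only [map_sub, eval_C]
    rw [abs_sub_le_iff]
    exact ⟨by linarith [hmax x x.2], by linarith [hmin x x.2]⟩
  have hkey := (happrox g).trans (by
    have := mul_le_mul_of_nonneg_left hsupg hc.le
    exact this)
  -- bddAbove of the sup over X of |eval · p| for any p
  have hbdd : ∀ p : MvPolynomial (Fin n) ℝ,
      BddAbove (Set.range fun x : X => |eval (x : Fin n → ℝ) p|) := by
    intro p
    have hcont : Continuous fun x : Fin n → ℝ => |eval x p| :=
      (MvPolynomial.continuous_eval (p := p)).abs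
    have := (hXc.image hcont).bddAbove
    refine this.mono ?_
    rintro y ⟨x, rfl⟩
    exact ⟨x, x.2, rfl⟩
  -- pointwise bound on Cop.symm g - g
  have hpt : ∀ x : X, |eval (x : Fin n → ℝ)
      ((Cop.symm g - g : restrictTotalDegree (Fin n) ℝ k) : MvPolynomial (Fin n) ℝ)| ≤ ε := by
    intro x
    refine le_trans (le_ciSup (hbdd _) x) (hkey.trans ?_)
    exact le_of_eq rfl
  -- the preimage element
  set h : restrictTotalDegree (Fin n) ℝ k := Cop.symm g + ε • one with hh
  have hnn : ∀ x ∈ X, 0 ≤ eval x (h : MvPolynomial (Fin n) ℝ) := by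
    intro x hx
    have h1 := hpt ⟨x, hx⟩
    have h2 : |eval x ((Cop.symm g : MvPolynomial (Fin n) ℝ) - (g : MvPolynomial (Fin n) ℝ))| ≤ ε := by
      simpa using h1
    have h3 : 0 ≤ eval x (g : MvPolynomial (Fin n) ℝ) := by
      rw [hgcoe]; simp only [map_sub, eval_C]
      linarith [hmin x hx]
    have h4 : eval x (g : MvPolynomial (Fin n) ℝ) - ε ≤ eval x ((Cop.symm g : MvPolynomial (Fin n) ℝ)) := by
      have := abs_le.mp h2
      simp only [map_sub] at this
      linarith [this.1]
    have hcoeh : eval x (h : MvPolynomial (Fin n) ℝ)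
        = eval x ((Cop.symm g : MvPolynomial (Fin n) ℝ)) + ε := by
      simp [hh, hone', smul_eq_C_mul]
    rw [hcoeh]; linarith
  have := hpos h hnn
  have hCh : ((Cop h : restrictTotalDegree (Fin n) ℝ k) : MvPolynomial (Fin n) ℝ)
      = (f : MvPolynomial (Fin n) ℝ) - C fmin + C ε := by
    have : Cop h = g + ε • Cop one := by
      simp [hh, map_add, map_smul]
    rw [this]
    push_cast [Submodule.coe_add, Submodule.coe_smul]
    rw [hone, hgcoe, smul_eq_C_mul, mul_one]
  rwa [hCh] at this
end
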